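/- arXiv:2411.17306 — 2 statements merged into one kernel-verified Lean document; each statement's English description precedes it below -/
import Mathlib

section
/- The dynamical category 𝒩̄_fd — whose objects are the finite-dimensional h*-graded complex vector spaces with all weights in the weight lattice Λ, and whose morphisms V→W are arbitrary functions from h*_reg to the space of grading-preserving linear maps V→W, composed pointwise — is a monoidal category when equipped with: the tensor product equal on objects to the usual tensor product of graded vector spaces; on morphisms the dynamical tensor product (A⊗̄B)(λ) := A(λ−h^{(2)})⊗B(λ) for λ∈h*_reg; unit object the one-dimensional graded space ℂ_0 concentrated in degree 0; and associativity and unit constraints given by the constant functions equal to the corresponding constraints of graded vector spaces. -/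
/-!  Common framework: graded vector spaces, quantum vertex operators,
dynamical fusion operators (à la Etingof–Varchenko).  -/

noncomputable section
open scoped TensorProduct

namespace EV

/-- A bundled complex vector space. -/
structure Ob where
  car : Type
  [acg : AddCommGroup car]
  [mod : Module ℂ car]

attribute [instance] Ob.acg Ob.mod

/-- A (finite-dimensional) `𝔥^*`-graded complex vector space, recorded by
its (finite) set of weights and the family of weight-space projections. -/
structure WOb (H : Type) [AddCommGroup H] extends Ob where
  supp : Finset H
  wp : H → (car →ₗ[ℂ] car)

variable {H : Type} [AddCommGroup H]

/-- The axioms making the data of a `WOb` a genuine weight decomposition: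
the `wp μ` are mutually orthogonal idempotents supported on `supp` and summing
to the identity, and the space is finite dimensional. -/
def WOb.IsWt [DecidableEq H] (V : WOb H) : Prop :=
  (∀ μ, μ ∉ V.supp → V.wp μ = 0) ∧
  (∀ μ ν, (V.wp μ) ∘ₗ (V.wp ν) = if μ = ν then V.wp μ else 0) ∧
  ((∑ μ ∈ V.supp, V.wp μ) = LinearMap.id) ∧
  FiniteDimensional ℂ V.car

/-- All weights of `V` belong to the weight lattice `Λ`. -/
def WOb.HasWts (V : WOb H) (Λ : AddSubgroup H) : Prop := ∀ μ ∈ V.supp, μ ∈ Λ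

open scoped Pointwise in
/-- Tensor product of graded vector spaces. -/
def WOb.tensW [DecidableEq H] (V W : WOb H) : WOb H where
  car := V.car ⊗[ℂ] W.car
  supp := V.supp + W.supp
  wp := fun μ => ∑ ν ∈ W.supp, TensorProduct.map (V.wp (μ - ν)) (W.wp ν)

/-- The unit object `ℂ_0`. -/
def WOb.unitW (H : Type) [AddCommGroup H] [DecidableEq H] : WOb H where
  car := ℂ
  supp := {0}
  wp := fun μ => if μ = 0 then LinearMap.id else 0

variable [DecidableEq H]

/-- The right-nested tensor product `V₁ ⊗ (V₂ ⊗ (⋯ ⊗ V_k))` of a list of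
graded vector spaces (`F^str`). -/
def tW : List (WOb H) → WOb H
  | [] => WOb.unitW H
  | [V] => V
  | V :: W :: r => V.tensW (tW (W :: r))

/-- `A(λ - h^{(2)}) ⊗ B(λ)` : dynamical tensor product of operators, the
argument of the first leg being shifted by the weight of the second leg. -/
def dynL {X Y : Type} [AddCommGroup X] [Module ℂ X] [AddCommGroup Y] [Module ℂ Y]
    (W W' : WOb H) (A : H → (X →ₗ[ℂ] Y)) (B : W.car →ₗ[ℂ] W'.car) (lam : H) :
    (X ⊗[ℂ] W.car) →ₗ[ℂ] (Y ⊗[ℂ] W'.car) :=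
  ∑ ν ∈ W.supp, TensorProduct.map (A (lam - ν)) (B ∘ₗ W.wp ν)

/-- `A(λ) ⊗ B(λ - h^{(1)})` : dynamical tensor product of operators, the
argument of the second leg being shifted by the weight of the first leg. -/
def dynR {X' Y' : Type} [AddCommGroup X'] [Module ℂ X'] [AddCommGroup Y'] [Module ℂ Y']
    (V : WOb H) {Y : Type} [AddCommGroup Y] [Module ℂ Y]
    (A : V.car →ₗ[ℂ] Y) (B : H → (X' →ₗ[ℂ] Y')) (lam : H) :
    (V.car ⊗[ℂ] X') →ₗ[ℂ] (Y ⊗[ℂ] Y') :=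
  ∑ ν ∈ V.supp, TensorProduct.map (A ∘ₗ V.wp ν) (B (lam - ν))

/-- `q^z := exp(z log q)` for `0 < q < 1`. -/
def qp (q : ℝ) (z : ℂ) : ℂ := Complex.exp (z * Real.log q)

variable [Module ℂ H]

/-- The action of `q^ξ` on a graded vector space (eigenvalue `q^{⟨ξ,σ⟩}` on the
weight space of weight `σ`). -/
def qAct (q : ℝ) (form : H →ₗ[ℂ] H →ₗ[ℂ] ℂ) (ξ : H) (W : WOb H) : W.car →ₗ[ℂ] W.car :=
  ∑ σ ∈ W.supp, qp q (form ξ σ) • W.wp σ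

/-- The action of `κ^n = q^{n Σᵢ xᵢ⊗xᵢ}` on a tensor product of graded spaces. -/
def kapPow (q : ℝ) (form : H →ₗ[ℂ] H →ₗ[ℂ] ℂ) (n : ℤ) (V W : WOb H) :
    (V.car ⊗[ℂ] W.car) →ₗ[ℂ] (V.car ⊗[ℂ] W.car) :=
  ∑ μ ∈ V.supp, ∑ ν ∈ W.supp, qp q ((n : ℂ) * form μ ν) • TensorProduct.map (V.wp μ) (W.wp ν)

/-- The character `χ_W(q^ξ) = Σ_σ dim W[σ] q^{⟨ξ,σ⟩}`. -/
def charW (q : ℝ) (form : H →ₗ[ℂ] H →ₗ[ℂ] ℂ) (ξ : H) (W : WOb H) : ℂ :=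
  ∑ σ ∈ W.supp, qp q (form ξ σ) * (Module.finrank ℂ (LinearMap.range (W.wp σ)) : ℂ)

/-- The Weyl denominator `δ(q^{2λ+2ρ})`. -/
def deltaW (q : ℝ) (form : H →ₗ[ℂ] H →ₗ[ℂ] ℂ) (Pos : Finset H) (rho lam : H) : ℂ :=
  qp q (2 * form (lam + rho) rho) * ∏ α ∈ Pos, (1 - qp q (-(2 * form (lam + rho) α)))

/-- Verma-module data: for each `λ ∈ 𝔥^*` a module `M_λ`, a highest-weight
vector `m_λ`, the dual functional `m_λ^*`, together with an (abstract)
predicate singling out the `U_q(𝔤)`-intertwiners `M_λ → M_{λ-ν} ⊗ V`. -/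
structure VermaData (H : Type) [AddCommGroup H] where
  M : H → Ob
  hw : ∀ lam, (M lam).car
  hwd : ∀ lam, (M lam).car →ₗ[ℂ] ℂ
  IsInt : (lam nu : H) → (V : Ob) →
    (((M lam).car) →ₗ[ℂ] ((M (lam - nu)).car ⊗[ℂ] V.car)) → Prop

/-- The expectation value `⟨f⟩ = (m^*_{λ-ν} ⊗ id)(f(m_λ))`. -/
def VermaData.ev (D : VermaData H) {lam nu : H} {V : Type} [AddCommGroup V] [Module ℂ V]
    (f : (D.M lam).car →ₗ[ℂ] ((D.M (lam - nu)).car ⊗[ℂ] V)) : V :=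
  TensorProduct.lid ℂ V ((TensorProduct.map (D.hwd (lam - nu)) LinearMap.id) (f (D.hw lam)))

/-- The quantum vertex operators `φ_λ^v : M_λ → M_{λ-ν} ⊗ V`, `v ∈ V[ν]`. -/
structure PhiData (H : Type) [AddCommGroup H] (D : VermaData H) where
  phi : (lam : H) → (V : WOb H) → (nu : H) →
    V.car →ₗ[ℂ] ((D.M lam).car →ₗ[ℂ] ((D.M (lam - nu)).car ⊗[ℂ] V.car))

/-- The defining properties of quantum vertex operators: for `λ ∈ 𝔥^*_reg` and
`v ∈ V[ν]`, `φ_λ^v` is the unique intertwiner `M_λ → M_{λ-ν} ⊗ V` with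
expectation value `v`. -/
structure PhiAxioms (hreg : Set H) (D : VermaData H) (P : PhiData H D) : Prop where
  ev_phi : ∀ lam ∈ hreg, ∀ (V : WOb H) (nu : H) (v : V.car), V.wp nu v = v →
    D.ev (P.phi lam V nu v) = v
  int_phi : ∀ lam ∈ hreg, ∀ (V : WOb H) (nu : H) (v : V.car), V.wp nu v = v →
    D.IsInt lam nu V.toOb (P.phi lam V nu v)
  uniq : ∀ lam ∈ hreg, ∀ (V : WOb H) (nu : H)
      (ψ : (D.M lam).car →ₗ[ℂ] ((D.M (lam - nu)).car ⊗[ℂ] V.car)),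
      D.IsInt lam nu V.toOb ψ → V.wp nu (D.ev ψ) = D.ev ψ →
      ψ = P.phi lam V nu (D.ev ψ)

/-- Cast between the underlying spaces of Verma modules with equal highest weights. -/
def Dcast (D : VermaData H) {a b : H} (h : a = b) : (D.M a).car ≃ₗ[ℂ] (D.M b).car := by
  subst h; exact LinearEquiv.refl ℂ _

/-- Cast between multi-tensor products of equal lists. -/
def tcastL {S T : List (WOb H)} (h : S = T) : (tW S).car ≃ₗ[ℂ] (tW T).car := by
  subst h; exact LinearEquiv.refl ℂ _

/-- A graded vector space together with a chosen weight and weight vector. -/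
structure WVec (H : Type) [AddCommGroup H] where
  V : WOb H
  nu : H
  v : V.car

/-- total weight of a list of weight vectors -/
def wtsum (l : List (WVec H)) : H := (l.map WVec.nu).sum

/-- The elementary tensor `v₁ ⊗ (v₂ ⊗ (⋯ ⊗ v_k))`. -/
def tvec : (l : List (WVec H)) → (tW (l.map WVec.V)).car
  | [] => (1 : ℂ)
  | [x] => x.v
  | x :: y :: r => x.v ⊗ₜ[ℂ] tvec (y :: r)

/-- A list of weight vectors is homogeneous. -/
def Homog (l : List (WVec H)) : Prop := ∀ x ∈ l, x.V.wp x.nu x.v = x.v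

/-- The `k`-point quantum vertex operator
`φ_λ^{v₁,…,v_k} = (φ^{v₁} ⊗ id) ∘ ⋯ ∘ φ_λ^{v_k} : M_λ → M_{λ-Σνᵢ} ⊗ (V₁⊗⋯⊗V_k)`. -/
def kphi (D : VermaData H) (P : PhiData H D) :
    (l : List (WVec H)) → (lam : H) →
    ((D.M lam).car →ₗ[ℂ] ((D.M (lam - wtsum l)).car ⊗[ℂ] (tW (l.map WVec.V)).car))
  | [], lam =>
      (TensorProduct.map (Dcast D (show lam = lam - wtsum ([] : List (WVec H)) by
          simp [wtsum])).toLinearMap LinearMap.id) ∘ₗ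
        (TensorProduct.rid ℂ (D.M lam).car).symm.toLinearMap
  | [x], lam =>
      (TensorProduct.map (Dcast D (show lam - x.nu = lam - wtsum [x] by
          simp [wtsum])).toLinearMap LinearMap.id) ∘ₗ (P.phi lam x.V x.nu x.v)
  | x :: y :: r, lam =>
      (TensorProduct.assoc ℂ _ _ _).toLinearMap ∘ₗ
      (TensorProduct.map
        ((TensorProduct.map (Dcast D (show lam - wtsum (y :: r) - x.nu
              = lam - wtsum (x :: y :: r) by
            simp only [wtsum, List.map_cons, List.sum_cons]; abel)).toLinearMap
          LinearMap.id) ∘ₗ (P.phi (lam - wtsum (y :: r)) x.V x.nu x.v))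
        (LinearMap.id : (tW ((y :: r).map WVec.V)).car →ₗ[ℂ] (tW ((y :: r).map WVec.V)).car)) ∘ₗ
      (kphi D P (y :: r) lam)

/-- Dynamical fusion operators `j_S(λ)` (and their inverses) on the
multi-tensor products `F^str(S)`. -/
structure FusionData (H : Type) [AddCommGroup H] [DecidableEq H] (D : VermaData H) where
  jf : (S : List (WOb H)) → H → ((tW S).car →ₗ[ℂ] (tW S).car)
  jfInv : (S : List (WOb H)) → H → ((tW S).car →ₗ[ℂ] (tW S).car)

/-- The defining properties of the dynamical fusion operators: they are the
expectation values (highest-weight coefficients) of the multi-point quantum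
vertex operators, they are invertible, and trivial on singletons. -/
structure FusionAxioms (hreg : Set H) (D : VermaData H) (P : PhiData H D)
    (F : FusionData H D) : Prop where
  jf_char : ∀ (l : List (WVec H)), Homog l → ∀ lam ∈ hreg,
    F.jf (l.map WVec.V) lam (tvec l) = D.ev (kphi D P l lam)
  jf_inv : ∀ (S : List (WOb H)) (lam : H),
    F.jf S lam ∘ₗ F.jfInv S lam = LinearMap.id ∧
    F.jfInv S lam ∘ₗ F.jf S lam = LinearMap.id
  jf_single : ∀ (V : WOb H) (lam : H), F.jf [V] lam = LinearMap.id
  jf_empty : ∀ lam : H, F.jf [] lam = LinearMap.id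

end EV
namespace EV

variable {H : Type} [AddCommGroup H] [DecidableEq H]

/-- `f` preserves the grading. -/
def GrPres (V W : WOb H) (f : V.car →ₗ[ℂ] W.car) : Prop :=
  ∀ μ, f ∘ₗ V.wp μ = W.wp μ ∘ₗ f

/-- Morphisms of the dynamical category `𝒩̄_fd` : arbitrary functions from
`𝔥^*_reg` to the grading-preserving linear maps (the grading-preservation is
recorded by the predicate `DGrPres` below). -/
def DMor (hreg : Set H) (V W : WOb H) : Type :=
  (lam : hreg) → (V.car →ₗ[ℂ] W.car)

def DGrPres (hreg : Set H) (V W : WOb H) (f : DMor hreg V W) : Prop :=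
  ∀ lam, GrPres V W (f lam)

/-- pointwise composition in `𝒩̄_fd` -/
def dComp {hreg : Set H} {U V W : WOb H} (f : DMor hreg V W) (g : DMor hreg U V) :
    DMor hreg U W := fun lam => f lam ∘ₗ g lam

/-- identity morphisms in `𝒩̄_fd` -/
def dId (hreg : Set H) (V : WOb H) : DMor hreg V V := fun _ => LinearMap.id

/-- constant morphisms in `𝒩̄_fd` (the image of `F^cst`) -/
def dConst (hreg : Set H) {V W : WOb H} (f : V.car →ₗ[ℂ] W.car) : DMor hreg V W :=
  fun _ => f

open Classical in
/-- The dynamical tensor product of morphisms,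
`(A ⊗̄ B)(λ) = A(λ - h^{(2)}) ⊗ B(λ)`. -/
noncomputable def dynT (hreg : Set H) {V V' W W' : WOb H}
    (A : DMor hreg V W) (B : DMor hreg V' W') :
    DMor hreg (V.tensW V') (W.tensW W') := fun lam =>
  ∑ ν ∈ V'.supp,
    if h : (lam : H) - ν ∈ hreg then
      TensorProduct.map (A ⟨(lam : H) - ν, h⟩) (B lam ∘ₗ V'.wp ν)
    else 0

set_option linter.unusedSectionVars false

section Aux

variable {hreg : Set H}

lemma sum_compL {ι X Y Z : Type} [AddCommGroup X] [Module ℂ X] [AddCommGroup Y] [Module ℂ Y]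
    [AddCommGroup Z] [Module ℂ Z] (s : Finset ι) (f : ι → (Y →ₗ[ℂ] Z)) (g : X →ₗ[ℂ] Y) :
    (∑ i ∈ s, f i) ∘ₗ g = ∑ i ∈ s, f i ∘ₗ g := by
  ext x
  simp [LinearMap.sum_apply]

lemma comp_sumL {ι X Y Z : Type} [AddCommGroup X] [Module ℂ X] [AddCommGroup Y] [Module ℂ Y]
    [AddCommGroup Z] [Module ℂ Z] (s : Finset ι) (g : Y →ₗ[ℂ] Z) (f : ι → (X →ₗ[ℂ] Y)) :
    g ∘ₗ (∑ i ∈ s, f i) = ∑ i ∈ s, g ∘ₗ f i := by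
  ext x
  simp [LinearMap.sum_apply, map_sum]

lemma tmap_sum_left {ι M N P Q : Type} [AddCommGroup M] [Module ℂ M] [AddCommGroup N] [Module ℂ N]
    [AddCommGroup P] [Module ℂ P] [AddCommGroup Q] [Module ℂ Q]
    (s : Finset ι) (f : ι → (M →ₗ[ℂ] P)) (g : N →ₗ[ℂ] Q) :
    TensorProduct.map (∑ i ∈ s, f i) g = ∑ i ∈ s, TensorProduct.map (f i) g := by
  apply TensorProduct.ext'
  intro x y
  simp [TensorProduct.sum_tmul, LinearMap.sum_apply]

lemma tmap_sum_right {ι M N P Q : Type} [AddCommGroup M] [Module ℂ M] [AddCommGroup N] [Module ℂ N]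
    [AddCommGroup P] [Module ℂ P] [AddCommGroup Q] [Module ℂ Q]
    (s : Finset ι) (f : M →ₗ[ℂ] P) (g : ι → (N →ₗ[ℂ] Q)) :
    TensorProduct.map f (∑ i ∈ s, g i) = ∑ i ∈ s, TensorProduct.map f (g i) := by
  apply TensorProduct.ext'
  intro x y
  simp [TensorProduct.tmul_sum, LinearMap.sum_apply]

lemma sum_shift {M : Type} [AddCommMonoid M] (s T : Finset H) (ν : H) (f : H → M)
    (hT : ∀ σ ∈ s, σ + ν ∈ T) (hf : ∀ τ ∈ T, τ - ν ∉ s → f τ = 0) :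
    ∑ τ ∈ T, f τ = ∑ σ ∈ s, f (σ + ν) := by
  calc ∑ τ ∈ T, f τ
      = ∑ τ ∈ s.image (fun σ => σ + ν), f τ := by
        refine (Finset.sum_subset ?_ ?_).symm
        · intro τ hτ
          obtain ⟨σ, hσ, rfl⟩ := Finset.mem_image.mp hτ
          exact hT σ hσ
        · intro τ hτ hτ'
          refine hf τ hτ fun hs => hτ' (Finset.mem_image.mpr ⟨τ - ν, hs, by abel⟩)
    _ = ∑ σ ∈ s, f (σ + ν) :=
        Finset.sum_image (fun a _ b _ h => add_right_cancel h)

lemma grpres_id (V : WOb H) : GrPres V V LinearMap.id := by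
  intro μ
  rw [LinearMap.id_comp, LinearMap.comp_id]

lemma grpres_zero (V W : WOb H) : GrPres V W 0 := by
  intro μ
  rw [LinearMap.zero_comp, LinearMap.comp_zero]

lemma wp_tensW (V W : WOb H) (μ : H) :
    (V.tensW W).wp μ = ∑ ν ∈ W.supp, TensorProduct.map (V.wp (μ - ν)) (W.wp ν) := rfl

lemma wp_tensW_eq (V W : WOb H) (μ : H) :
    (V.tensW W).wp μ = ∑ ν ∈ W.supp, TensorProduct.map (V.wp (μ - ν)) (LinearMap.id ∘ₗ W.wp ν) := by
  simp only [LinearMap.id_comp]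
  rfl

open Classical in
/-- Resolve a dynamical morphism at an arbitrary point of `H` (zero outside `hreg`). -/
noncomputable def resolve (hreg : Set H) {V W : WOb H} (A : DMor hreg V W) (x : H) :
    V.car →ₗ[ℂ] W.car :=
  if h : x ∈ hreg then A ⟨x, h⟩ else 0

lemma resolve_mem {V W : WOb H} (A : DMor hreg V W) {x : H} (h : x ∈ hreg) :
    resolve hreg A x = A ⟨x, h⟩ := dif_pos h

lemma resolve_coe {V W : WOb H} (A : DMor hreg V W) (lam : hreg) :
    resolve hreg A (lam : H) = A lam := dif_pos lam.2

lemma resolve_grpres {V W : WOb H} {A : DMor hreg V W} (hA : DGrPres hreg V W A) (x : H) :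
    GrPres V W (resolve hreg A x) := by
  unfold resolve
  split_ifs with h
  · exact hA _
  · exact grpres_zero V W

lemma resolve_dComp {U V W : WOb H} (A : DMor hreg V W) (B : DMor hreg U V) (x : H) :
    resolve hreg (dComp A B) x = resolve hreg A x ∘ₗ resolve hreg B x := by
  unfold resolve
  split_ifs with h
  · rfl
  · rw [LinearMap.zero_comp]

lemma dynT_eq {V V' W W' : WOb H} (A : DMor hreg V W) (B : DMor hreg V' W') (lam : hreg) :
    dynT hreg A B lam = ∑ ν ∈ V'.supp,
      TensorProduct.map (resolve hreg A ((lam : H) - ν)) (B lam ∘ₗ V'.wp ν) := by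
  refine Finset.sum_congr rfl fun ν _ => ?_
  unfold resolve
  by_cases h : (lam : H) - ν ∈ hreg
  · rw [dif_pos h]; exact dif_pos h
  · rw [dif_neg h, TensorProduct.map_zero_left]; exact dif_neg h

lemma resolve_dynT {V V' W W' : WOb H} (A : DMor hreg V W) (B : DMor hreg V' W') (x : H) :
    resolve hreg (dynT hreg A B) x = ∑ ν ∈ V'.supp,
      TensorProduct.map (resolve hreg A (x - ν)) (resolve hreg B x ∘ₗ V'.wp ν) := by
  by_cases h : x ∈ hreg
  · rw [resolve_mem _ h, dynT_eq]
    refine Finset.sum_congr rfl fun ν _ => ?_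
    rw [resolve_mem B h]
  · unfold resolve
    rw [dif_neg h]
    symm
    refine Finset.sum_eq_zero fun ν _ => ?_
    rw [dif_neg h, LinearMap.zero_comp, TensorProduct.map_zero_right]
    rfl

lemma leg2 {U' V' W' : WOb H} (hV' : V'.IsWt) (g : V'.car →ₗ[ℂ] W'.car)
    (g' : U'.car →ₗ[ℂ] V'.car) (hg' : GrPres U' V' g') (ν ν' : H) :
    (g ∘ₗ V'.wp ν) ∘ₗ (g' ∘ₗ U'.wp ν') =
      if ν = ν' then g ∘ₗ g' ∘ₗ U'.wp ν' else 0 := by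
  obtain ⟨-, hVo, -, -⟩ := hV'
  ext x
  simp only [LinearMap.comp_apply]
  have e1 : g' (U'.wp ν' x) = V'.wp ν' (g' x) := LinearMap.congr_fun (hg' ν') x
  rw [e1, ← LinearMap.comp_apply (V'.wp ν), hVo ν ν']
  split_ifs with h
  · subst h
    simp only [LinearMap.comp_apply, e1]
  · simp

lemma sum_map_comp {X Y Z : Type} [AddCommGroup X] [Module ℂ X] [AddCommGroup Y] [Module ℂ Y]
    [AddCommGroup Z] [Module ℂ Z] {U' V' W' : WOb H} (hV' : V'.IsWt)
    (f : H → (Y →ₗ[ℂ] Z)) (f' : H → (X →ₗ[ℂ] Y))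
    (g : V'.car →ₗ[ℂ] W'.car) (g' : U'.car →ₗ[ℂ] V'.car) (hg' : GrPres U' V' g') :
    (∑ ν ∈ V'.supp, TensorProduct.map (f ν) (g ∘ₗ V'.wp ν)) ∘ₗ
      (∑ ν ∈ U'.supp, TensorProduct.map (f' ν) (g' ∘ₗ U'.wp ν)) =
    ∑ ν ∈ U'.supp, TensorProduct.map (f ν ∘ₗ f' ν) (g ∘ₗ g' ∘ₗ U'.wp ν) := by
  have hV0 := hV'.1
  rw [sum_compL]
  calc
    ∑ ν ∈ V'.supp, (TensorProduct.map (f ν) (g ∘ₗ V'.wp ν)) ∘ₗ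
        (∑ ν' ∈ U'.supp, TensorProduct.map (f' ν') (g' ∘ₗ U'.wp ν'))
      = ∑ ν ∈ V'.supp, ∑ ν' ∈ U'.supp, (if ν = ν' then
          TensorProduct.map (f ν ∘ₗ f' ν') (g ∘ₗ g' ∘ₗ U'.wp ν') else 0) := by
        refine Finset.sum_congr rfl fun ν _ => ?_
        rw [comp_sumL]
        refine Finset.sum_congr rfl fun ν' _ => ?_
        rw [← TensorProduct.map_comp, leg2 hV' g g' hg' ν ν']
        split_ifs with h
        · rfl
        · rw [TensorProduct.map_zero_right]
    _ = ∑ ν' ∈ U'.supp, ∑ ν ∈ V'.supp, (if ν = ν' then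
          TensorProduct.map (f ν ∘ₗ f' ν') (g ∘ₗ g' ∘ₗ U'.wp ν') else 0) := Finset.sum_comm
    _ = ∑ ν' ∈ U'.supp, TensorProduct.map (f ν' ∘ₗ f' ν') (g ∘ₗ g' ∘ₗ U'.wp ν') := by
        refine Finset.sum_congr rfl fun ν' hν' => ?_
        rw [Finset.sum_ite_eq' V'.supp ν'
          (fun ν => TensorProduct.map (f ν ∘ₗ f' ν') (g ∘ₗ g' ∘ₗ U'.wp ν'))]
        split_ifs with h
        · rfl
        · rw [hg' ν', hV0 ν' h, LinearMap.zero_comp, LinearMap.comp_zero,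
            TensorProduct.map_zero_right]

end Aux
section Aux2

open scoped Pointwise

variable {hreg : Set H}

@[simp] lemma dComp_apply {U V W : WOb H} (f : DMor hreg V W) (g : DMor hreg U V) (lam : hreg) :
    dComp f g lam = f lam ∘ₗ g lam := rfl

@[simp] lemma dConst_apply {V W : WOb H} (f : V.car →ₗ[ℂ] W.car) (lam : hreg) :
    dConst hreg f lam = f := rfl

@[simp] lemma dId_apply (V : WOb H) (lam : hreg) : dId hreg V lam = LinearMap.id := rfl

lemma tensW_hasWts {V W : WOb H} {Λ : AddSubgroup H} (hV : V.HasWts Λ) (hW : W.HasWts Λ) :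
    (V.tensW W).HasWts Λ := by
  intro μ hμ
  obtain ⟨a, ha, b, hb, rfl⟩ := Finset.mem_add.mp hμ
  exact Λ.add_mem (hV a ha) (hW b hb)

lemma tensW_isWt {V W : WOb H} (hV : V.IsWt) (hW : W.IsWt) : (V.tensW W).IsWt := by
  obtain ⟨hV0, hVo, hVs, hVf⟩ := hV
  obtain ⟨hW0, hWo, hWs, hWf⟩ := hW
  refine ⟨?_, ?_, ?_, ?_⟩
  · intro μ hμ
    refine Finset.sum_eq_zero fun ν hν => ?_
    have hm : μ - ν ∉ V.supp := fun h => hμ (by have := Finset.add_mem_add h hν; rw [sub_add_cancel] at this; exact this)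
    rw [hV0 _ hm, TensorProduct.map_zero_left]
    rfl
  · intro μ μ'
    show (∑ ν ∈ W.supp, TensorProduct.map (V.wp (μ - ν)) (W.wp ν)) ∘ₗ
        (∑ ν ∈ W.supp, TensorProduct.map (V.wp (μ' - ν)) (W.wp ν)) = _
    rw [sum_compL]
    calc
      ∑ ν ∈ W.supp, (TensorProduct.map (V.wp (μ - ν)) (W.wp ν)) ∘ₗ
          (∑ ν' ∈ W.supp, TensorProduct.map (V.wp (μ' - ν')) (W.wp ν'))
        = ∑ ν ∈ W.supp, ∑ ν' ∈ W.supp, (if ν' = ν then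
            TensorProduct.map (V.wp (μ - ν) ∘ₗ V.wp (μ' - ν)) (W.wp ν) else 0) := by
          refine Finset.sum_congr rfl fun ν _ => ?_
          rw [comp_sumL]
          refine Finset.sum_congr rfl fun ν' _ => ?_
          rw [← TensorProduct.map_comp, hWo ν ν']
          by_cases h : ν' = ν
          · subst h
            rw [if_pos rfl, if_pos rfl]
          · rw [if_neg fun hh => h hh.symm, TensorProduct.map_zero_right, if_neg h]
        _ = ∑ ν ∈ W.supp, TensorProduct.map (V.wp (μ - ν) ∘ₗ V.wp (μ' - ν)) (W.wp ν) := by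
          refine Finset.sum_congr rfl fun ν hν => ?_
          rw [Finset.sum_ite_eq' W.supp ν
            (fun _ => TensorProduct.map (V.wp (μ - ν) ∘ₗ V.wp (μ' - ν)) (W.wp ν)), if_pos hν]
        _ = (if μ = μ' then (V.tensW W).wp μ else 0 : V.car ⊗[ℂ] W.car →ₗ[ℂ] V.car ⊗[ℂ] W.car) := by
          by_cases h : μ = μ'
          · subst h
            refine Eq.trans ?_ (if_pos rfl).symm
            rw [wp_tensW]
            refine Finset.sum_congr rfl fun ν _ => ?_
            rw [hVo, if_pos rfl]
          · refine Eq.trans ?_ (if_neg h).symm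
            refine Finset.sum_eq_zero fun ν _ => ?_
            rw [hVo, if_neg fun hh => h (sub_left_inj.mp hh), TensorProduct.map_zero_left]
  · show ∑ μ ∈ V.supp + W.supp, ∑ ν ∈ W.supp,
        TensorProduct.map (V.wp (μ - ν)) (W.wp ν) = _
    rw [Finset.sum_comm]
    calc
      ∑ ν ∈ W.supp, ∑ μ ∈ V.supp + W.supp, TensorProduct.map (V.wp (μ - ν)) (W.wp ν)
        = ∑ ν ∈ W.supp, ∑ σ ∈ V.supp, TensorProduct.map (V.wp σ) (W.wp ν) := by
          refine Finset.sum_congr rfl fun ν hν => ?_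
          refine (sum_shift V.supp _ ν _ (fun σ hσ => Finset.add_mem_add hσ hν)
            (fun τ _ hτ => by rw [hV0 _ hτ, TensorProduct.map_zero_left])).trans ?_
          refine Finset.sum_congr rfl fun σ _ => ?_
          rw [add_sub_cancel_right]
        _ = ∑ ν ∈ W.supp, TensorProduct.map LinearMap.id (W.wp ν) := by
          refine Finset.sum_congr rfl fun ν _ => ?_
          rw [← tmap_sum_left, hVs]
        _ = LinearMap.id := by
          rw [← tmap_sum_right, hWs, TensorProduct.map_id]
  · haveI := hVf
    haveI := hWf
    exact Module.Finite.tensorProduct ℂ V.car W.car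

lemma unitW_isWt : (WOb.unitW H).IsWt := by
  refine ⟨?_, ?_, ?_, ?_⟩
  · intro μ hμ
    have h : μ ≠ 0 := by simpa [WOb.unitW] using hμ
    show (if μ = 0 then (LinearMap.id : ℂ →ₗ[ℂ] ℂ) else 0) = 0
    rw [if_neg h]
  · intro μ ν
    show ((if μ = 0 then (LinearMap.id : ℂ →ₗ[ℂ] ℂ) else 0) ∘ₗ
        (if ν = 0 then (LinearMap.id : ℂ →ₗ[ℂ] ℂ) else 0)) =
      if μ = ν then (if μ = 0 then (LinearMap.id : ℂ →ₗ[ℂ] ℂ) else 0) else 0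
    by_cases hμ : μ = 0 <;> by_cases hν : ν = 0
    · subst hμ; subst hν; simp
    · subst hμ; simp [hν, Ne.symm hν]
    · subst hν; simp [hμ]
    · by_cases h : μ = ν
      · subst h; simp [hμ]
      · simp [hμ, hν, h]
  · show ∑ μ ∈ ({0} : Finset H), (WOb.unitW H).wp μ = _
    rw [Finset.sum_singleton]
    show (if (0 : H) = 0 then (LinearMap.id : ℂ →ₗ[ℂ] ℂ) else 0) = _
    rw [if_pos rfl]
    rfl
  · show FiniteDimensional ℂ ℂ
    infer_instance

lemma unitW_hasWts (Λ : AddSubgroup H) : (WOb.unitW H).HasWts Λ := by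
  intro μ hμ
  have h : μ = 0 := by simpa [WOb.unitW] using hμ
  rw [h]
  exact Λ.zero_mem

lemma assoc_nat {M₁ M₂ M₃ N₁ N₂ N₃ : Type}
    [AddCommGroup M₁] [Module ℂ M₁] [AddCommGroup M₂] [Module ℂ M₂]
    [AddCommGroup M₃] [Module ℂ M₃] [AddCommGroup N₁] [Module ℂ N₁]
    [AddCommGroup N₂] [Module ℂ N₂] [AddCommGroup N₃] [Module ℂ N₃]
    (f : M₁ →ₗ[ℂ] N₁) (g : M₂ →ₗ[ℂ] N₂) (h : M₃ →ₗ[ℂ] N₃) :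
    (TensorProduct.assoc ℂ N₁ N₂ N₃).toLinearMap ∘ₗ
        TensorProduct.map (TensorProduct.map f g) h
      = TensorProduct.map f (TensorProduct.map g h) ∘ₗ
        (TensorProduct.assoc ℂ M₁ M₂ M₃).toLinearMap := by
  apply TensorProduct.ext_threefold
  intro x y z
  simp

lemma lid_nat {M N : Type} [AddCommGroup M] [Module ℂ M] [AddCommGroup N] [Module ℂ N]
    (f : M →ₗ[ℂ] N) :
    (TensorProduct.lid ℂ N).toLinearMap ∘ₗ TensorProduct.map LinearMap.id f
      = f ∘ₗ (TensorProduct.lid ℂ M).toLinearMap := by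
  apply TensorProduct.ext'
  intro x y
  simp

lemma rid_nat {M N : Type} [AddCommGroup M] [Module ℂ M] [AddCommGroup N] [Module ℂ N]
    (f : M →ₗ[ℂ] N) :
    (TensorProduct.rid ℂ N).toLinearMap ∘ₗ TensorProduct.map f LinearMap.id
      = f ∘ₗ (TensorProduct.rid ℂ M).toLinearMap := by
  apply TensorProduct.ext'
  intro x y
  simp

lemma pentagon_vs (U V W X : Type) [AddCommGroup U] [Module ℂ U] [AddCommGroup V] [Module ℂ V]
    [AddCommGroup W] [Module ℂ W] [AddCommGroup X] [Module ℂ X] :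
    TensorProduct.map LinearMap.id (TensorProduct.assoc ℂ V W X).toLinearMap ∘ₗ
        ((TensorProduct.assoc ℂ U (V ⊗[ℂ] W) X).toLinearMap ∘ₗ
          TensorProduct.map (TensorProduct.assoc ℂ U V W).toLinearMap LinearMap.id)
      = (TensorProduct.assoc ℂ U V (W ⊗[ℂ] X)).toLinearMap ∘ₗ
        (TensorProduct.assoc ℂ (U ⊗[ℂ] V) W X).toLinearMap := by
  apply TensorProduct.ext_fourfold
  intro u v w x
  simp

lemma triangle_vs (V W : Type) [AddCommGroup V] [Module ℂ V] [AddCommGroup W] [Module ℂ W] :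
    TensorProduct.map LinearMap.id (TensorProduct.lid ℂ W).toLinearMap ∘ₗ
        (TensorProduct.assoc ℂ V ℂ W).toLinearMap
      = TensorProduct.map (TensorProduct.rid ℂ V).toLinearMap LinearMap.id := by
  apply TensorProduct.ext_threefold
  intro x y z
  simp [TensorProduct.smul_tmul']

lemma dynT_dId_morph {Λ : AddSubgroup H}
    (hstab : ∀ lam ∈ hreg, ∀ ν ∈ Λ, lam - ν ∈ hreg)
    {U V W : WOb H} (hV : V.IsWt) (hΛ : V.HasWts Λ) (A : DMor hreg V W) (lam : hreg) :
    dynT hreg (dId hreg U) A lam = TensorProduct.map LinearMap.id (A lam) := by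
  rw [dynT_eq]
  calc
    ∑ ν ∈ V.supp, TensorProduct.map (resolve hreg (dId hreg U) ((lam : H) - ν))
        (A lam ∘ₗ V.wp ν)
      = ∑ ν ∈ V.supp, TensorProduct.map LinearMap.id (A lam ∘ₗ V.wp ν) := by
        refine Finset.sum_congr rfl fun ν hν => ?_
        rw [resolve_mem _ (hstab _ lam.2 _ (hΛ _ hν))]
        rfl
      _ = TensorProduct.map LinearMap.id (A lam ∘ₗ ∑ ν ∈ V.supp, V.wp ν) := by
        rw [comp_sumL, tmap_sum_right]
      _ = _ := by rw [hV.2.2.1, LinearMap.comp_id]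

lemma dynT_const_dId {Λ : AddSubgroup H}
    (hstab : ∀ lam ∈ hreg, ∀ ν ∈ Λ, lam - ν ∈ hreg)
    {V V' W : WOb H} (hW : W.IsWt) (hΛ : W.HasWts Λ) (f : V.car →ₗ[ℂ] V'.car) (lam : hreg) :
    dynT hreg (dConst hreg f) (dId hreg W) lam = TensorProduct.map f LinearMap.id := by
  rw [dynT_eq]
  calc
    ∑ ν ∈ W.supp, TensorProduct.map (resolve hreg (dConst hreg f) ((lam : H) - ν))
        (dId hreg W lam ∘ₗ W.wp ν)
      = ∑ ν ∈ W.supp, TensorProduct.map f (W.wp ν) := by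
        refine Finset.sum_congr rfl fun ν hν => ?_
        rw [resolve_mem _ (hstab _ lam.2 _ (hΛ _ hν))]
        rfl
      _ = TensorProduct.map f (∑ ν ∈ W.supp, W.wp ν) := (tmap_sum_right _ _ _).symm
      _ = _ := by rw [hW.2.2.1]

lemma dynT_dId_unit {V W : WOb H} (A : DMor hreg V W) (lam : hreg) :
    dynT hreg A (dId hreg (WOb.unitW H)) lam = TensorProduct.map (A lam) LinearMap.id := by
  rw [dynT_eq]
  show ∑ ν ∈ ({0} : Finset H), TensorProduct.map (resolve hreg A ((lam : H) - ν))
      (LinearMap.id ∘ₗ (if ν = 0 then (LinearMap.id : ℂ →ₗ[ℂ] ℂ) else 0)) = _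
  rw [Finset.sum_singleton, sub_zero, resolve_coe, if_pos rfl, LinearMap.id_comp]
  rfl

lemma wp_unit_left {V : WOb H} (hV : V.IsWt) (μ : H) :
    ((WOb.unitW H).tensW V).wp μ = TensorProduct.map LinearMap.id (V.wp μ) := by
  rw [wp_tensW]
  by_cases h : μ ∈ V.supp
  · calc
      ∑ ν ∈ V.supp, TensorProduct.map ((WOb.unitW H).wp (μ - ν)) (V.wp ν)
        = TensorProduct.map ((WOb.unitW H).wp (μ - μ)) (V.wp μ) := by
          refine Finset.sum_eq_single μ (fun ν _ hne => ?_) (fun hh => absurd h hh)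
          show TensorProduct.map (if μ - ν = 0 then (LinearMap.id : ℂ →ₗ[ℂ] ℂ) else 0)
            (V.wp ν) = 0
          rw [if_neg fun hh => hne (sub_eq_zero.mp hh).symm, TensorProduct.map_zero_left]
        _ = _ := by
          show TensorProduct.map (if μ - μ = 0 then (LinearMap.id : ℂ →ₗ[ℂ] ℂ) else 0)
            (V.wp μ) = _
          rw [if_pos (sub_self μ)]
          rfl
  · rw [hV.1 μ h, TensorProduct.map_zero_right]
    refine Finset.sum_eq_zero fun ν hν => ?_
    show TensorProduct.map (if μ - ν = 0 then (LinearMap.id : ℂ →ₗ[ℂ] ℂ) else 0) (V.wp ν) = 0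
    rw [if_neg fun hh => h (by rw [sub_eq_zero.mp hh]; exact hν), TensorProduct.map_zero_left]

lemma wp_unit_right {V : WOb H} (μ : H) :
    (V.tensW (WOb.unitW H)).wp μ = TensorProduct.map (V.wp μ) LinearMap.id := by
  rw [wp_tensW]
  show ∑ ν ∈ ({0} : Finset H), TensorProduct.map (V.wp (μ - ν)) ((WOb.unitW H).wp ν) = _
  rw [Finset.sum_singleton, sub_zero]
  show TensorProduct.map (V.wp μ) (if (0 : H) = 0 then (LinearMap.id : ℂ →ₗ[ℂ] ℂ) else 0) = _
  rw [if_pos rfl]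
  rfl

lemma grpres_assoc {U V W : WOb H} (hU : U.IsWt) (hV : V.IsWt) (hW : W.IsWt) :
    GrPres ((U.tensW V).tensW W) (U.tensW (V.tensW W))
      (TensorProduct.assoc ℂ U.car V.car W.car).toLinearMap := by
  intro μ
  have L1 : ((U.tensW V).tensW W).wp μ = ∑ ρ ∈ W.supp, ∑ σ ∈ V.supp,
      TensorProduct.map (TensorProduct.map (U.wp (μ - ρ - σ)) (V.wp σ)) (W.wp ρ) := by
    rw [wp_tensW]
    refine Finset.sum_congr rfl fun ρ _ => ?_
    rw [wp_tensW]; exact tmap_sum_left _ _ _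
  have L2 : (U.tensW (V.tensW W)).wp μ = ∑ τ ∈ (V.tensW W).supp, ∑ ρ ∈ W.supp,
      TensorProduct.map (U.wp (μ - τ)) (TensorProduct.map (V.wp (τ - ρ)) (W.wp ρ)) := by
    rw [wp_tensW]
    refine Finset.sum_congr rfl fun τ _ => ?_
    rw [wp_tensW]; exact tmap_sum_right _ _ _
  rw [L1, L2]
  have h1 : (TensorProduct.assoc ℂ U.car V.car W.car).toLinearMap ∘ₗ
      (∑ ρ ∈ W.supp, ∑ σ ∈ V.supp,
        TensorProduct.map (TensorProduct.map (U.wp (μ - ρ - σ)) (V.wp σ)) (W.wp ρ))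
      = ∑ ρ ∈ W.supp, ∑ σ ∈ V.supp,
        TensorProduct.map (U.wp (μ - ρ - σ)) (TensorProduct.map (V.wp σ) (W.wp ρ)) ∘ₗ
          (TensorProduct.assoc ℂ U.car V.car W.car).toLinearMap := by
    simp only [comp_sumL]
    exact Finset.sum_congr rfl fun ρ _ => Finset.sum_congr rfl fun σ _ => assoc_nat _ _ _
  have h2 : (∑ τ ∈ (V.tensW W).supp, ∑ ρ ∈ W.supp,
      TensorProduct.map (U.wp (μ - τ)) (TensorProduct.map (V.wp (τ - ρ)) (W.wp ρ))) ∘ₗ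
        (TensorProduct.assoc ℂ U.car V.car W.car).toLinearMap
      = ∑ ρ ∈ W.supp, ∑ σ ∈ V.supp,
        TensorProduct.map (U.wp (μ - ρ - σ)) (TensorProduct.map (V.wp σ) (W.wp ρ)) ∘ₗ
          (TensorProduct.assoc ℂ U.car V.car W.car).toLinearMap := by
    simp only [sum_compL]
    rw [Finset.sum_comm]
    refine Finset.sum_congr rfl fun ρ hρ => ?_
    refine Eq.trans (sum_shift V.supp ((V.tensW W).supp) ρ
      (fun τ => TensorProduct.map (U.wp (μ - τ)) (TensorProduct.map (V.wp (τ - ρ)) (W.wp ρ)) ∘ₗ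
        (TensorProduct.assoc ℂ U.car V.car W.car).toLinearMap)
      (fun σ hσ => Finset.add_mem_add hσ hρ)
      (fun τ _ hτ => by
        rw [hV.1 _ hτ, TensorProduct.map_zero_left, TensorProduct.map_zero_right,
          LinearMap.zero_comp])) ?_
    refine Finset.sum_congr rfl fun σ _ => ?_
    have h3 : μ - (σ + ρ) = μ - ρ - σ := by abel
    rw [h3, add_sub_cancel_right]
  exact h1.trans h2.symm

lemma grpres_lid {V : WOb H} (hV : V.IsWt) :
    GrPres ((WOb.unitW H).tensW V) V (TensorProduct.lid ℂ V.car).toLinearMap := by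
  intro μ
  rw [wp_unit_left hV]
  exact lid_nat (V.wp μ)

lemma grpres_rid (V : WOb H) :
    GrPres (V.tensW (WOb.unitW H)) V (TensorProduct.rid ℂ V.car).toLinearMap := by
  intro μ
  rw [wp_unit_right]
  exact rid_nat (V.wp μ)

end Aux2
/-- The dynamical category `𝒩̄_fd` — objects the
finite-dimensional `𝔥^*`-graded vector spaces with weights in `Λ`, morphisms
the functions `𝔥^*_reg → {grading-preserving linear maps}` with pointwise
composition — is a monoidal category for the dynamical tensor product
`(A ⊗̄ B)(λ) = A(λ-h^{(2)}) ⊗ B(λ)`, with unit `ℂ_0` and with associativity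
and unit constraints the constant functions given by the corresponding
constraints of graded vector spaces.  (The conjunction below consists of:
well-definedness of the tensor product on objects and morphisms, bifunctoriality,
the constraints being well defined (grading-preserving) and natural, and the
pentagon and triangle axioms.) -/
theorem statement0 {H : Type} [AddCommGroup H] [DecidableEq H] [Module ℂ H]
    (Λ : AddSubgroup H) (hreg : Set H)
    (hstab : ∀ lam ∈ hreg, ∀ ν ∈ Λ, lam - ν ∈ hreg) :
    -- (a) the tensor product and the unit are well defined on objects
    (∀ V W : WOb H, V.IsWt → W.IsWt → V.HasWts Λ → W.HasWts Λ →
      (V.tensW W).IsWt ∧ (V.tensW W).HasWts Λ)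
    ∧ ((WOb.unitW H).IsWt ∧ (WOb.unitW H).HasWts Λ)
    -- (b) the dynamical tensor product of grading-preserving morphisms is
    -- grading preserving
    ∧ (∀ (V V' W W' : WOb H), V.IsWt → V'.IsWt → W.IsWt → W'.IsWt →
        V.HasWts Λ → V'.HasWts Λ → W.HasWts Λ → W'.HasWts Λ →
        ∀ (A : DMor hreg V W) (B : DMor hreg V' W'),
          DGrPres hreg V W A → DGrPres hreg V' W' B →
          DGrPres hreg (V.tensW V') (W.tensW W') (dynT hreg A B))
    -- (c) bifunctoriality : `id ⊗̄ id = id` and the interchange law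
    ∧ (∀ (V V' : WOb H), V.IsWt → V'.IsWt → V.HasWts Λ → V'.HasWts Λ →
        dynT hreg (dId hreg V) (dId hreg V') = dId hreg (V.tensW V'))
    ∧ (∀ (U U' V V' W W' : WOb H),
        U.IsWt → U'.IsWt → V.IsWt → V'.IsWt → W.IsWt → W'.IsWt →
        U.HasWts Λ → U'.HasWts Λ → V.HasWts Λ → V'.HasWts Λ →
        W.HasWts Λ → W'.HasWts Λ →
        ∀ (A : DMor hreg V W) (A' : DMor hreg U V)
          (B : DMor hreg V' W') (B' : DMor hreg U' V'),
          DGrPres hreg V W A → DGrPres hreg U V A' →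
          DGrPres hreg V' W' B → DGrPres hreg U' V' B' →
          dynT hreg (dComp A A') (dComp B B')
            = dComp (dynT hreg A B) (dynT hreg A' B'))
    -- (d) the constraints (constant functions of `λ`) are grading preserving
    ∧ (∀ U V W : WOb H, U.IsWt → V.IsWt → W.IsWt →
        GrPres ((U.tensW V).tensW W) (U.tensW (V.tensW W))
          (TensorProduct.assoc ℂ U.car V.car W.car).toLinearMap)
    ∧ (∀ V : WOb H, V.IsWt →
        GrPres ((WOb.unitW H).tensW V) V (TensorProduct.lid ℂ V.car).toLinearMap
        ∧ GrPres (V.tensW (WOb.unitW H)) V (TensorProduct.rid ℂ V.car).toLinearMap)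
    -- (e) naturality of the associativity constraint
    ∧ (∀ (U U' V V' W W' : WOb H),
        U.IsWt → U'.IsWt → V.IsWt → V'.IsWt → W.IsWt → W'.IsWt →
        U.HasWts Λ → U'.HasWts Λ → V.HasWts Λ → V'.HasWts Λ →
        W.HasWts Λ → W'.HasWts Λ →
        ∀ (A : DMor hreg U U') (B : DMor hreg V V') (C : DMor hreg W W'),
          DGrPres hreg U U' A → DGrPres hreg V V' B → DGrPres hreg W W' C →
          dComp (dConst hreg (TensorProduct.assoc ℂ U'.car V'.car W'.car).toLinearMap)
              (dynT hreg (dynT hreg A B) C)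
            = dComp (dynT hreg A (dynT hreg B C))
              (dConst hreg (TensorProduct.assoc ℂ U.car V.car W.car).toLinearMap))
    -- (f) naturality of the unit constraints
    ∧ (∀ (V V' : WOb H), V.IsWt → V'.IsWt → V.HasWts Λ → V'.HasWts Λ →
        ∀ (A : DMor hreg V V'), DGrPres hreg V V' A →
          (dComp (dConst hreg (TensorProduct.lid ℂ V'.car).toLinearMap)
              (dynT hreg (dId hreg (WOb.unitW H)) A)
            = dComp A (dConst hreg (TensorProduct.lid ℂ V.car).toLinearMap))
          ∧ (dComp (dConst hreg (TensorProduct.rid ℂ V'.car).toLinearMap)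
              (dynT hreg A (dId hreg (WOb.unitW H)))
            = dComp A (dConst hreg (TensorProduct.rid ℂ V.car).toLinearMap)))
    -- (g) the pentagon axiom
    ∧ (∀ (U V W X : WOb H), U.IsWt → V.IsWt → W.IsWt → X.IsWt →
        U.HasWts Λ → V.HasWts Λ → W.HasWts Λ → X.HasWts Λ →
        dComp
          (dynT hreg (dId hreg U)
            (dConst hreg (V := (V.tensW W).tensW X) (W := V.tensW (W.tensW X))
              (TensorProduct.assoc ℂ V.car W.car X.car).toLinearMap))
          (dComp
            (dConst hreg (V := (U.tensW (V.tensW W)).tensW X)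
              (W := U.tensW ((V.tensW W).tensW X))
              (TensorProduct.assoc ℂ U.car (V.car ⊗[ℂ] W.car) X.car).toLinearMap)
            (dynT hreg
              (dConst hreg (V := (U.tensW V).tensW W) (W := U.tensW (V.tensW W))
                (TensorProduct.assoc ℂ U.car V.car W.car).toLinearMap)
              (dId hreg X)))
          = dComp
              (dConst hreg (V := (U.tensW V).tensW (W.tensW X))
                (W := U.tensW (V.tensW (W.tensW X)))
                (TensorProduct.assoc ℂ U.car V.car (W.car ⊗[ℂ] X.car)).toLinearMap)
              (dConst hreg (V := ((U.tensW V).tensW W).tensW X)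
                (W := (U.tensW V).tensW (W.tensW X))
                (TensorProduct.assoc ℂ (U.car ⊗[ℂ] V.car) W.car X.car).toLinearMap))
    -- (h) the triangle axiom
    ∧ (∀ (V W : WOb H), V.IsWt → W.IsWt → V.HasWts Λ → W.HasWts Λ →
        dComp (dynT hreg (dId hreg V)
            (dConst hreg (V := (WOb.unitW H).tensW W) (W := W)
              (TensorProduct.lid ℂ W.car).toLinearMap))
            (dConst hreg (TensorProduct.assoc ℂ V.car (WOb.unitW H).car W.car).toLinearMap)
          = dynT hreg
              (dConst hreg (V := V.tensW (WOb.unitW H)) (W := V)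
                (TensorProduct.rid ℂ V.car).toLinearMap)
              (dId hreg W)) := by

  refine ⟨?_, ⟨unitW_isWt, unitW_hasWts Λ⟩, ?_, ?_, ?_, ?_, ?_, ?_, ?_, ?_, ?_⟩
  · -- (a)
    intro V W hV hW hVΛ hWΛ
    exact ⟨tensW_isWt hV hW, tensW_hasWts hVΛ hWΛ⟩
  · -- (b)
    intro V V' W W' hV hV' hW hW' _ _ _ _ A B hA hB lam μ
    rw [dynT_eq, wp_tensW_eq V V' μ, wp_tensW_eq W W' μ]
    refine ((sum_map_comp hV' _ _ (B lam) LinearMap.id (grpres_id V')).trans ?_).trans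
      (sum_map_comp hW' _ _ LinearMap.id (B lam) (hB lam)).symm
    refine Finset.sum_congr rfl fun ν _ => ?_
    rw [resolve_grpres hA ((lam : H) - ν) (μ - ν)]
    simp only [LinearMap.id_comp]
  · -- (c) id ⊗̄ id = id
    intro V V' hV hV' hVΛ hV'Λ
    funext lam
    rw [dynT_dId_morph hstab hV' hV'Λ (dId hreg V') lam]
    simp only [dId_apply]
    exact TensorProduct.map_id
  · -- interchange
    intro U U' V V' W W' hU hU' hV hV' hW hW' _ _ _ _ _ _ A A' B B' hA hA' hB hB'
    funext lam
    show dynT hreg (dComp A A') (dComp B B') lam = dynT hreg A B lam ∘ₗ dynT hreg A' B' lam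
    rw [dynT_eq, dynT_eq, dynT_eq]
    refine Eq.trans ?_ (sum_map_comp hV' _ _ (B lam) (B' lam) (hB' lam)).symm
    refine Finset.sum_congr rfl fun ν _ => ?_
    rw [resolve_dComp]
    rfl
  · -- (d) associativity constraint preserves grading
    intro U V W hU hV hW
    exact grpres_assoc hU hV hW
  · -- unit constraints preserve grading
    intro V hV
    exact ⟨grpres_lid hV, grpres_rid V⟩
  · -- (e) naturality of associativity
    intro U U' V V' W W' hU hU' hV hV' hW hW' _ _ _ _ _ _ A B C hA hB hC
    funext lam
    simp only [dComp_apply, dConst_apply]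
    have hL : dynT hreg (dynT hreg A B) C lam
        = ∑ ρ ∈ W.supp, ∑ σ ∈ V.supp, TensorProduct.map
            (TensorProduct.map (resolve hreg A ((lam : H) - ρ - σ))
              (resolve hreg B ((lam : H) - ρ) ∘ₗ V.wp σ))
            (C lam ∘ₗ W.wp ρ) := by
      rw [dynT_eq]
      refine Finset.sum_congr rfl fun ρ _ => ?_
      rw [resolve_dynT]; exact tmap_sum_left _ _ _
    have hR : dynT hreg A (dynT hreg B C) lam
        = ∑ τ ∈ (V.tensW W).supp, ∑ ρ ∈ W.supp,
            TensorProduct.map (resolve hreg A ((lam : H) - τ))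
              (TensorProduct.map (resolve hreg B ((lam : H) - ρ) ∘ₗ V.wp (τ - ρ))
                (C lam ∘ₗ LinearMap.id ∘ₗ W.wp ρ)) := by
      rw [dynT_eq]
      refine Finset.sum_congr rfl fun τ _ => ?_
      have e : dynT hreg B C lam ∘ₗ (V.tensW W).wp τ
          = ∑ ρ ∈ W.supp, TensorProduct.map (resolve hreg B ((lam : H) - ρ) ∘ₗ V.wp (τ - ρ))
              (C lam ∘ₗ LinearMap.id ∘ₗ W.wp ρ) := by
        rw [dynT_eq, wp_tensW_eq]
        exact sum_map_comp hW _ _ (C lam) LinearMap.id (grpres_id W)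
      rw [e]; exact tmap_sum_right _ _ _
    rw [hL, hR]
    have h1 : (TensorProduct.assoc ℂ U'.car V'.car W'.car).toLinearMap ∘ₗ
        (∑ ρ ∈ W.supp, ∑ σ ∈ V.supp, TensorProduct.map
            (TensorProduct.map (resolve hreg A ((lam : H) - ρ - σ))
              (resolve hreg B ((lam : H) - ρ) ∘ₗ V.wp σ))
            (C lam ∘ₗ W.wp ρ))
        = ∑ ρ ∈ W.supp, ∑ σ ∈ V.supp,
            TensorProduct.map (resolve hreg A ((lam : H) - ρ - σ))
              (TensorProduct.map (resolve hreg B ((lam : H) - ρ) ∘ₗ V.wp σ)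
                (C lam ∘ₗ W.wp ρ)) ∘ₗ
              (TensorProduct.assoc ℂ U.car V.car W.car).toLinearMap := by
      simp only [comp_sumL]
      exact Finset.sum_congr rfl fun ρ _ => Finset.sum_congr rfl fun σ _ => assoc_nat _ _ _
    have h2 : (∑ τ ∈ (V.tensW W).supp, ∑ ρ ∈ W.supp,
          TensorProduct.map (resolve hreg A ((lam : H) - τ))
            (TensorProduct.map (resolve hreg B ((lam : H) - ρ) ∘ₗ V.wp (τ - ρ))
              (C lam ∘ₗ LinearMap.id ∘ₗ W.wp ρ))) ∘ₗ
          (TensorProduct.assoc ℂ U.car V.car W.car).toLinearMap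
        = ∑ ρ ∈ W.supp, ∑ σ ∈ V.supp,
            TensorProduct.map (resolve hreg A ((lam : H) - ρ - σ))
              (TensorProduct.map (resolve hreg B ((lam : H) - ρ) ∘ₗ V.wp σ)
                (C lam ∘ₗ W.wp ρ)) ∘ₗ
              (TensorProduct.assoc ℂ U.car V.car W.car).toLinearMap := by
      simp only [sum_compL]
      rw [Finset.sum_comm]
      refine Finset.sum_congr rfl fun ρ hρ => ?_
      refine Eq.trans (sum_shift V.supp ((V.tensW W).supp) ρ
        (fun τ => TensorProduct.map (resolve hreg A ((lam : H) - τ))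
            (TensorProduct.map (resolve hreg B ((lam : H) - ρ) ∘ₗ V.wp (τ - ρ))
              (C lam ∘ₗ LinearMap.id ∘ₗ W.wp ρ)) ∘ₗ
          (TensorProduct.assoc ℂ U.car V.car W.car).toLinearMap)
        (fun σ hσ => Finset.add_mem_add hσ hρ)
        (fun τ _ hτ => by
          rw [hV.1 _ hτ, LinearMap.comp_zero, TensorProduct.map_zero_left,
            TensorProduct.map_zero_right, LinearMap.zero_comp])) ?_
      refine Finset.sum_congr rfl fun σ _ => ?_
      have h3 : (lam : H) - (σ + ρ) = (lam : H) - ρ - σ := by abel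
      rw [h3, add_sub_cancel_right, LinearMap.id_comp]
    exact h1.trans h2.symm
  · -- (f) naturality of unit constraints
    intro V V' hV hV' hVΛ hV'Λ A hA
    constructor
    · funext lam
      simp only [dComp_apply, dConst_apply]
      rw [dynT_dId_morph hstab hV hVΛ A lam]
      exact lid_nat (A lam)
    · funext lam
      simp only [dComp_apply, dConst_apply]
      rw [dynT_dId_unit A lam]
      exact rid_nat (A lam)
  · -- (g) pentagon
    intro U V W X hU hV hW hX hUΛ hVΛ hWΛ hXΛ
    funext lam
    simp only [dComp_apply, dConst_apply]
    rw [dynT_dId_morph hstab (tensW_isWt (tensW_isWt hV hW) hX)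
        (tensW_hasWts (tensW_hasWts hVΛ hWΛ) hXΛ) _ lam]
    erw [dynT_const_dId hstab hX hXΛ _ lam]
    exact pentagon_vs U.car V.car W.car X.car
  · -- (h) triangle
    intro V W hV hW hVΛ hWΛ
    funext lam
    simp only [dComp_apply, dConst_apply]
    rw [dynT_dId_morph hstab (tensW_isWt unitW_isWt hW)
        (tensW_hasWts (unitW_hasWts Λ) hWΛ) _ lam]
    erw [dynT_const_dId hstab hW hWΛ _ lam]
    exact triangle_vs V.car W.car

end EV
end
end

section
/- Let V ∈ M_fd and λ ∈ h*_reg. Writing the universal dynamical fusion matrix as 𝕁(λ) = Σ_{β∈Q⁺} X_β⊗Y_β with X_β∈U⁻[−β] and Y_β∈U⁺[β], one has for all v∈V and f∈V*: ẽ_V( j_{(V,V*)}(λ)(v⊗f) ) = f( q^{2ρ}·ℚ(λ)·v ), where ℚ(λ) := m^{op}((id⊗S^{-1})𝕁(λ)) = Σ_β S^{-1}(Y_β)X_β. Equivalently, the operator ℚ_V(λ) := (ē̃_V(λ)⊗id_V)∘(id_V⊗ι̃_V), with ē̃_V(λ) := ẽ_V∘j_{(V,V*)}(λ), coincides with the action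 of ℚ(λ) on V. -/
/-!  Common framework: graded vector spaces, quantum vertex operators,
dynamical fusion operators (à la Etingof–Varchenko).  -/

noncomputable section
open scoped TensorProduct

namespace EV

variable {H : Type} [AddCommGroup H] [DecidableEq H]

/-- The canonical identification `F^str(S ++ T) ≃ F^str(S) ⊗ F^str(T)`
built from the associativity and unit constraints. -/
def sigEquiv : (S T : List (WOb H)) → ((tW (S ++ T)).car ≃ₗ[ℂ] ((tW S).car ⊗[ℂ] (tW T).car))
  | [], T => (TensorProduct.lid ℂ (tW T).car).symm
  | [V], [] => (TensorProduct.rid ℂ V.car).symm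
  | [V], (W :: T) => LinearEquiv.refl ℂ _
  | (V :: V' :: S), T =>
      (TensorProduct.congr (LinearEquiv.refl ℂ V.car) (sigEquiv (V' :: S) T)).trans
        (TensorProduct.assoc ℂ V.car (tW (V' :: S)).car (tW T).car).symm

end EV
namespace EV

variable {H : Type} [AddCommGroup H] [DecidableEq H]

/-- The dual graded vector space `V^*` (with `V^*[μ]` dual to `V[-μ]`). -/
def dualW (V : WOb H) : WOb H where
  car := Module.Dual ℂ V.car
  supp := V.supp.image (fun μ => -μ)
  wp := fun μ => (V.wp (-μ)).dualMap

end EV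
namespace EV

/-! Since `S²(u) = q^{2ρ} u q^{-2ρ}`, one has `S(Y) q^{2ρ} = q^{2ρ} S⁻¹(Y)` on `V`, so a term
`X ⊗ Y` of `𝕁(λ)` contributes `f(S(Y) q^{2ρ} X v) = f(q^{2ρ} S⁻¹(Y) X v)` to `ẽ_V(j(v ⊗ f))`.
The operator identity is then the zigzag identity: pairing with `ι̃_V` recovers
`q^{-2ρ} q^{2ρ} ℚ(λ) v = ℚ(λ) v` from its coordinates. -/

section

variable {R M : Type} [CommRing R] [AddCommGroup M] [Module R M]

lemma sum_smul_comp_sum_smul_of_orthogonal {ι : Type} [DecidableEq ι] (s : Finset ι)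
    (p : ι → Module.End R M)
    (horth : ∀ i j, p i ∘ₗ p j = if i = j then p i else 0) (a b : ι → R) :
    (∑ i ∈ s, a i • p i) ∘ₗ (∑ j ∈ s, b j • p j) = ∑ i ∈ s, (a i * b i) • p i := by
  simp only [← Module.End.mul_eq_comp] at horth ⊢
  simp only [Finset.sum_mul, Finset.mul_sum, smul_mul_smul_comm, horth, smul_ite, smul_zero,
    Finset.sum_ite_eq']
  exact Finset.sum_congr rfl fun i hi => if_pos hi

/-- The paper's `ẽ_V` is `rightEval q^{2ρ}`. -/
def rightEval (T : Module.End R M) : M ⊗[R] Module.Dual R M →ₗ[R] R :=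
  TensorProduct.lift ((LinearMap.id : Module.Dual R M →ₗ[R] M →ₗ[R] R).flip ∘ₗ T)

@[simp]
lemma rightEval_tmul (T : Module.End R M) (x : M) (f : Module.Dual R M) :
    rightEval T (x ⊗ₜ f) = f (T x) :=
  rfl

lemma antipode_comp_eq_comp_antipodeInv {U : Type} [Ring U] [Algebra R U]
    (ρ : U →ₐ[R] Module.End R M) (S S' : U →ₗ[R] U) (hSS' : ∀ u, S (S' u) = u)
    (T : Module.End R M) (hS2 : ∀ u, T ∘ₗ ρ u = ρ (S (S u)) ∘ₗ T) (u : U) :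
    ρ (S u) ∘ₗ T = T ∘ₗ ρ (S' u) := by
  rw [hS2, hSS']

lemma rightEval_sum_map_dualMap_tmul {U ι : Type} [Ring U] [Algebra R U]
    (ρ : U →ₐ[R] Module.End R M) (S S' : U →ₗ[R] U) (T : Module.End R M)
    (hT : ∀ u, ρ (S u) ∘ₗ T = T ∘ₗ ρ (S' u))
    (s : Finset ι) (J : ι → List (U × U)) (v : M) (f : Module.Dual R M) :
    rightEval T ((∑ β ∈ s, ((J β).map fun p =>
        TensorProduct.map (ρ p.1) (ρ (S p.2)).dualMap).sum) (v ⊗ₜ f))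
      = f (T ((∑ β ∈ s, ((J β).map fun p => ρ (S' p.2 * p.1)).sum) v)) := by
  let lhs : Module.End R (M ⊗[R] Module.Dual R M) →ₗ[R] R :=
    rightEval T ∘ₗ LinearMap.applyₗ (v ⊗ₜ f)
  let rhs : Module.End R M →ₗ[R] R := f ∘ₗ LinearMap.applyₗ v ∘ₗ LinearMap.compRight R T
  change lhs _ = rhs _
  simp only [map_sum, map_list_sum, List.map_map]
  refine Finset.sum_congr rfl fun β _ => congrArg List.sum (List.map_congr_left fun p _ => ?_)
  simp only [lhs, rhs, LinearMap.coe_comp, Function.comp_apply, LinearMap.applyₗ_apply_apply,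
    TensorProduct.map_tmul, rightEval_tmul, LinearMap.dualMap_apply,
    ← LinearMap.comp_apply (ρ (S p.2)) T, hT, map_mul, LinearMap.compRight_apply,
    Module.End.mul_apply]

lemma zigzag_coord_sum_eq_comp {ι : Type} [Fintype ι] (b : Module.Basis ι R M)
    (E : M ⊗[R] Module.Dual R M →ₗ[R] R) (A T : Module.End R M)
    (hE : ∀ v f, E (v ⊗ₜ f) = f (A v)) :
    (TensorProduct.lid R M).toLinearMap ∘ₗ TensorProduct.map E LinearMap.id ∘ₗ
        (TensorProduct.assoc R M (Module.Dual R M) M).symm.toLinearMap ∘ₗ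
        (TensorProduct.mk R M (Module.Dual R M ⊗[R] M)).flip
          (∑ i, b.coord i ⊗ₜ[R] T (b i))
      = T ∘ₗ A := by
  ext v
  simp only [map_sum, LinearMap.coe_comp, LinearEquiv.coe_coe, LinearMap.coe_sum,
    Function.comp_apply, Finset.sum_apply, LinearMap.flip_apply, TensorProduct.mk_apply,
    TensorProduct.assoc_symm_tmul, TensorProduct.map_tmul, hE, Module.Basis.coord_apply,
    LinearMap.id_coe, id_eq, TensorProduct.lid_tmul]
  simp_rw [← map_smul]
  rw [← map_sum, b.sum_repr]

end

lemma qp_neg_mul_qp (q : ℝ) (a : ℂ) : qp q (-a) * qp q a = 1 := by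
  rw [qp, qp, ← Complex.exp_add, neg_mul, neg_add_cancel, Complex.exp_zero]

lemma qAct_neg_comp_qAct {H : Type} [AddCommGroup H] [DecidableEq H] [Module ℂ H]
    (q : ℝ) (form : H →ₗ[ℂ] H →ₗ[ℂ] ℂ) (ξ : H) (V : WOb H)
    (horth : ∀ μ ν, V.wp μ ∘ₗ V.wp ν = if μ = ν then V.wp μ else 0)
    (hsum : ∑ μ ∈ V.supp, V.wp μ = LinearMap.id) :
    qAct q form (-ξ) V ∘ₗ qAct q form ξ V = LinearMap.id := by
  simp only [qAct, sum_smul_comp_sum_smul_of_orthogonal _ _ horth, map_neg, LinearMap.neg_apply,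
    qp_neg_mul_qp, one_smul, hsum]

theorem statement7_general
    {H : Type} [AddCommGroup H] [DecidableEq H] [Module ℂ H]
    (q : ℝ)
    (form : H →ₗ[ℂ] H →ₗ[ℂ] ℂ)
    (rho : H)
    (D : VermaData H)
    (F : FusionData H D)
    -- the quantized universal enveloping algebra with its antipode
    (U : Type) [Ring U] [Algebra ℂ U]
    (antip antipInv : U →ₗ[ℂ] U)
    (hanti : ∀ u, antip (antipInv u) = u ∧ antipInv (antip u) = u)
    -- the module `V` and the action of `U_q(𝔤)` on it
    (V : WOb H) (hVwt : V.IsWt)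
    (n : ℕ) (bV : Module.Basis (Fin n) ℂ V.car)
    (ρV : U →ₐ[ℂ] Module.End ℂ V.car)
    -- `S²(X) = q^{2ρ} X q^{-2ρ}`
    (hS2 : ∀ u : U, qAct q form (2 • rho) V ∘ₗ (ρV u : V.car →ₗ[ℂ] V.car)
      = (ρV (antip (antip u)) : V.car →ₗ[ℂ] V.car) ∘ₗ qAct q form (2 • rho) V)
    -- the components `𝕁_β(λ) = Σ X_β ⊗ Y_β` of the universal fusion matrix
    (Jβ : H → H → List (U × U))
    (lam : H)
    -- the action of `𝕁(λ)` on `V ⊗ V^*` is `j_{(V,V^*)}(λ)` (a finite sum)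
    (Fs : Finset H)
    (hJact : (∀ β ∉ Fs,
        ((Jβ lam β).map (fun p => TensorProduct.map
          (ρV p.1 : V.car →ₗ[ℂ] V.car)
          ((ρV (antip p.2) : V.car →ₗ[ℂ] V.car).dualMap))).sum = 0) ∧
      (∑ β ∈ Fs, ((Jβ lam β).map (fun p => TensorProduct.map
          (ρV p.1 : V.car →ₗ[ℂ] V.car)
          ((ρV (antip p.2) : V.car →ₗ[ℂ] V.car).dualMap))).sum
        = F.jf [V, dualW V] lam)) :
    -- `ẽ_V(v ⊗ f) := f(q^{2ρ} v)`
    (letI etilde : (V.car ⊗[ℂ] (dualW V).car) →ₗ[ℂ] ℂ :=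
      TensorProduct.lift
        ((LinearMap.id : Module.Dual ℂ V.car →ₗ[ℂ] (V.car →ₗ[ℂ] ℂ)).flip ∘ₗ
          qAct q form (2 • rho) V)
     -- the action of `ℚ(λ) = Σ_β S⁻¹(Y_β) X_β` on `V`
     letI Qact : V.car →ₗ[ℂ] V.car :=
       ∑ β ∈ Fs, ((Jβ lam β).map (fun p => (ρV (antipInv p.2 * p.1) : V.car →ₗ[ℂ] V.car))).sum
     -- `ι̃_V(1) = Σ_b b^* ⊗ q^{-2ρ} b`
     letI iotavec : (dualW V).car ⊗[ℂ] V.car :=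
       ∑ i, (bV.coord i) ⊗ₜ[ℂ] (qAct q form (-(2 • rho)) V (bV i))
     -- `ℚ_V(λ) = (ē̃_V(λ) ⊗ id_V) ∘ (id_V ⊗ ι̃_V)`
     letI Qop : V.car →ₗ[ℂ] V.car :=
       (TensorProduct.lid ℂ V.car).toLinearMap ∘ₗ
         TensorProduct.map (etilde ∘ₗ F.jf [V, dualW V] lam) LinearMap.id ∘ₗ
         (TensorProduct.assoc ℂ V.car (dualW V).car V.car).symm.toLinearMap ∘ₗ
         (TensorProduct.mk ℂ V.car ((dualW V).car ⊗[ℂ] V.car)).flip iotavec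
     -- the two assertions
     (∀ (v : V.car) (f : Module.Dual ℂ V.car),
        etilde (F.jf [V, dualW V] lam (v ⊗ₜ[ℂ] f))
          = f (qAct q form (2 • rho) V (Qact v)))
     ∧ Qop = Qact) := by
  have hT := antipode_comp_eq_comp_antipodeInv ρV antip antipInv (fun u => (hanti u).1) _ hS2
  have hfirst : ∀ (v : V.car) (f : Module.Dual ℂ V.car),
      (rightEval (qAct q form (2 • rho) V) ∘ₗ F.jf [V, dualW V] lam) (v ⊗ₜ[ℂ] f)
        = f ((qAct q form (2 • rho) V ∘ₗ
          ∑ β ∈ Fs, ((Jβ lam β).map fun p => ρV (antipInv p.2 * p.1)).sum) v) := by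
    intro v f
    rw [LinearMap.comp_apply, ← hJact.2]
    exact rightEval_sum_map_dualMap_tmul ρV antip antipInv _ hT Fs (Jβ lam) v f
  refine ⟨hfirst, ?_⟩
  refine (zigzag_coord_sum_eq_comp bV _ _ _ hfirst).trans ?_
  rw [← LinearMap.comp_assoc,
    qAct_neg_comp_qAct q form _ V hVwt.2.1 hVwt.2.2.1, LinearMap.id_comp]

/-- the operator `ℚ(λ)`.  Writing the universal dynamical
fusion matrix as `𝕁(λ) = Σ_{β∈Q⁺} X_β ⊗ Y_β` (here: a family of finite lists
of pure tensors `Jβ λ β`, with `X_β ∈ U⁻[-β]`, `Y_β ∈ U⁺[β]`, whose action on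
`V ⊗ V^*` sums to `j_{(V,V^*)}(λ)`), one has for all `v ∈ V`, `f ∈ V^*`:
`ẽ_V(j_{(V,V^*)}(λ)(v ⊗ f)) = f(q^{2ρ} ⬝ ℚ(λ) ⬝ v)` where
`ℚ(λ) = m^{op}((id ⊗ S⁻¹)𝕁(λ)) = Σ_β S⁻¹(Y_β) X_β`; equivalently the operator
`ℚ_V(λ) = (ē̃_V(λ) ⊗ id_V) ∘ (id_V ⊗ ι̃_V)`, with `ē̃_V(λ) = ẽ_V ∘ j_{(V,V^*)}(λ)`,
coincides with the action of `ℚ(λ)` on `V`. -/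
theorem statement7
    {H : Type} [AddCommGroup H] [DecidableEq H] [Module ℂ H]
    (Λ : AddSubgroup H) (hreg : Set H)
    (hstab : ∀ lam ∈ hreg, ∀ ν ∈ Λ, lam - ν ∈ hreg)
    (q : ℝ) (hq : 0 < q ∧ q < 1)
    (form : H →ₗ[ℂ] H →ₗ[ℂ] ℂ) (hsymm : ∀ a b, form a b = form b a)
    (rho : H)
    (D : VermaData H) (P : PhiData H D) (hP : PhiAxioms hreg D P)
    (F : FusionData H D) (hF : FusionAxioms hreg D P F)
    -- the quantized universal enveloping algebra with its antipode
    (U : Type) [Ring U] [Algebra ℂ U]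
    (antip antipInv : U →ₗ[ℂ] U)
    (hanti : ∀ u, antip (antipInv u) = u ∧ antipInv (antip u) = u)
    (hantihom : ∀ u u' : U, antip (u * u') = antip u' * antip u)
    -- the module `V` and the action of `U_q(𝔤)` on it
    (V : WOb H) (hVwt : V.IsWt) (hVΛ : V.HasWts Λ)
    (n : ℕ) (bV : Module.Basis (Fin n) ℂ V.car)
    (ρV : U →ₐ[ℂ] Module.End ℂ V.car)
    -- `S²(X) = q^{2ρ} X q^{-2ρ}`
    (hS2 : ∀ u : U, qAct q form (2 • rho) V ∘ₗ (ρV u : V.car →ₗ[ℂ] V.car)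
      = (ρV (antip (antip u)) : V.car →ₗ[ℂ] V.car) ∘ₗ qAct q form (2 • rho) V)
    -- the components `𝕁_β(λ) = Σ X_β ⊗ Y_β` of the universal fusion matrix
    (Jβ : H → H → List (U × U))
    (hJ0 : ∀ lam, Jβ lam 0 = [(1, 1)])
    -- triangularity: `X_β ∈ U⁻[-β]` lowers weights by `β`, `Y_β ∈ U⁺[β]` raises them
    (hJwt : ∀ lam β, ∀ p ∈ Jβ lam β, ∀ ν : H,
      ((ρV p.1 : V.car →ₗ[ℂ] V.car) ∘ₗ V.wp ν = V.wp (ν - β) ∘ₗ (ρV p.1 : V.car →ₗ[ℂ] V.car)) ∧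
      ((ρV p.2 : V.car →ₗ[ℂ] V.car) ∘ₗ V.wp ν = V.wp (ν + β) ∘ₗ (ρV p.2 : V.car →ₗ[ℂ] V.car)))
    (lam : H) (hlam : lam ∈ hreg)
    -- the action of `𝕁(λ)` on `V ⊗ V^*` is `j_{(V,V^*)}(λ)` (a finite sum)
    (Fs : Finset H)
    (hJact : (∀ β ∉ Fs,
        ((Jβ lam β).map (fun p => TensorProduct.map
          (ρV p.1 : V.car →ₗ[ℂ] V.car)
          ((ρV (antip p.2) : V.car →ₗ[ℂ] V.car).dualMap))).sum = 0) ∧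
      (∑ β ∈ Fs, ((Jβ lam β).map (fun p => TensorProduct.map
          (ρV p.1 : V.car →ₗ[ℂ] V.car)
          ((ρV (antip p.2) : V.car →ₗ[ℂ] V.car).dualMap))).sum
        = F.jf [V, dualW V] lam)) :
    -- `ẽ_V(v ⊗ f) := f(q^{2ρ} v)`
    (letI etilde : (V.car ⊗[ℂ] (dualW V).car) →ₗ[ℂ] ℂ :=
      TensorProduct.lift
        ((LinearMap.id : Module.Dual ℂ V.car →ₗ[ℂ] (V.car →ₗ[ℂ] ℂ)).flip ∘ₗ
          qAct q form (2 • rho) V)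
     -- the action of `ℚ(λ) = Σ_β S⁻¹(Y_β) X_β` on `V`
     letI Qact : V.car →ₗ[ℂ] V.car :=
       ∑ β ∈ Fs, ((Jβ lam β).map (fun p => (ρV (antipInv p.2 * p.1) : V.car →ₗ[ℂ] V.car))).sum
     -- `ι̃_V(1) = Σ_b b^* ⊗ q^{-2ρ} b`
     letI iotavec : (dualW V).car ⊗[ℂ] V.car :=
       ∑ i, (bV.coord i) ⊗ₜ[ℂ] (qAct q form (-(2 • rho)) V (bV i))
     -- `ℚ_V(λ) = (ē̃_V(λ) ⊗ id_V) ∘ (id_V ⊗ ι̃_V)`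
     letI Qop : V.car →ₗ[ℂ] V.car :=
       (TensorProduct.lid ℂ V.car).toLinearMap ∘ₗ
         TensorProduct.map (etilde ∘ₗ F.jf [V, dualW V] lam) LinearMap.id ∘ₗ
         (TensorProduct.assoc ℂ V.car (dualW V).car V.car).symm.toLinearMap ∘ₗ
         (TensorProduct.mk ℂ V.car ((dualW V).car ⊗[ℂ] V.car)).flip iotavec
     -- the two assertions
     (∀ (v : V.car) (f : Module.Dual ℂ V.car),
        etilde (F.jf [V, dualW V] lam (v ⊗ₜ[ℂ] f))
          = f (qAct q form (2 • rho) V (Qact v)))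
     ∧ Qop = Qact) :=
  statement7_general q form rho D F U antip antipInv hanti V hVwt n bV ρV hS2 Jβ lam Fs hJact

end EV
end
end
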